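/- arXiv:2210.02294 — 3 statements merged into one kernel-verified Lean document; each statement's English description precedes it below -/
import Mathlib

section
/- Let σ be a tempered distribution on ℝ that vanishes to order m ≥ 0 at a point p ∈ ℝ. Let c₁ > 0 and let (φ_T)_{T>0} be a family of smooth functions on ℝ such that each φ_T has support contained in (p − c₁/T, p + c₁/T) and, for every integer j ≥ 0, there is a constant c_{2,j} > 0 with sup_{x∈ℝ} |φ_T^{(j)}(x)| ≤ c_{2,j} T^{j+1} for all T > 0. Then there exist C > 0 and T₀ > 0 such that |σ(φ_T)| ≤ C T^{−m} for all T ≥ T₀. -/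
open MeasureTheory Set

noncomputable section
def e2 (z : ℂ) : ℂ := Complex.exp (2 * Real.pi * Complex.I * z)


/-- The tempered distribution associated with the coefficients `(c_n)_{n≥1}`:
`σ(φ) = Σ_{n≥1} c_n ∫_ℝ e(nx)φ(x) dx`. -/
def assocDist (c : ℕ → ℂ) (φ : ℝ → ℂ) : ℂ :=
  ∑' n : ℕ, c (n + 1) * ∫ x : ℝ, e2 (((n : ℂ) + 1) * (x : ℂ)) * φ x

/-- A distribution `σ` vanishes to order `m ≥ 0` at `x₀` if there are `δ > 0`, `J`,
and locally bounded measurable functions `h_j` on `I = (x₀-δ, x₀+δ)` such that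
`σ(φ) = Σ_{j=0}^J (-1)^j ∫_I (x-x₀)^{m+j} h_j(x) φ^{(j)}(x) dx` for all smooth `φ`
with compact support contained in `I`. -/
def VanishesToOrder (σ : (ℝ → ℂ) → ℂ) (m : ℕ) (x₀ : ℝ) : Prop :=
  ∃ δ > 0, ∃ J : ℕ, ∃ h : ℕ → ℝ → ℂ,
    (∀ j ≤ J, Measurable (h j) ∧ ∀ K : Set ℝ, IsCompact K →
      K ⊆ Set.Ioo (x₀ - δ) (x₀ + δ) → ∃ C : ℝ, ∀ x ∈ K, ‖h j x‖ ≤ C) ∧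
    ∀ φ : ℝ → ℂ, ContDiff ℝ (⊤ : ℕ∞) φ → HasCompactSupport φ →
      tsupport φ ⊆ Set.Ioo (x₀ - δ) (x₀ + δ) →
      σ φ = ∑ j ∈ Finset.range (J + 1), (-1 : ℂ) ^ j *
        ∫ x in Set.Ioo (x₀ - δ) (x₀ + δ),
          ((x : ℂ) - (x₀ : ℂ)) ^ (m + j) * h j x * iteratedDeriv j φ x

/-! On the support of `φ_T`, which lies in `(p - c₁/T, p + c₁/T)`, the `j`-th term of the
representation of `σ(φ_T)` has integrand of size `(c₁/T)^(m+j) · H_j · c₂ⱼ T^(j+1)`, and the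
interval has length `2c₁/T`; the powers of `T` cancel to `T^(-m)`. Once `c₁/T ≤ δ/2` the
locally bounded `h_j` admit bounds `H_j` uniform in `T`, on the compact interval of radius `δ/2`. -/

open Function

theorem support_iteratedDeriv_subset {𝕜 F : Type*} [NontriviallyNormedField 𝕜]
    [NormedAddCommGroup F] [NormedSpace 𝕜 F] {f : 𝕜 → F} (n : ℕ) :
    support (iteratedDeriv n f) ⊆ tsupport f := fun x hx => by
  by_contra hxf
  apply hx
  rw [iteratedDeriv_eq_iteratedFDeriv,
    image_eq_zero_of_notMem_tsupport fun h => hxf (tsupport_iteratedFDeriv_subset n h)]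
  rfl

theorem norm_setIntegral_le_of_eq_zero_off_Ioo {E : Type*} [NormedAddCommGroup E]
    [NormedSpace ℝ E] {f : ℝ → E} {S : Set ℝ} {a r B : ℝ} (hS : MeasurableSet S) (hr : 0 ≤ r)
    (hsub : Ioo (a - r) (a + r) ⊆ S) (hzero : ∀ x ∉ Ioo (a - r) (a + r), f x = 0)
    (hB : ∀ x ∈ Ioo (a - r) (a + r), ‖f x‖ ≤ B) :
    ‖∫ x in S, f x‖ ≤ B * (2 * r) := by
  rw [setIntegral_eq_of_subset_of_forall_sdiff_eq_zero hS hsub fun x hx => hzero x hx.2]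
  convert norm_setIntegral_le_of_norm_le_const (μ := volume) measure_Ioo_lt_top hB using 2
  rw [Real.volume_real_Ioo_of_le (by linarith)]
  ring

theorem norm_setIntegral_pow_mul_mul_le {g u : ℝ → ℂ} {S : Set ℝ} {p r H D : ℝ} (k : ℕ)
    (hS : MeasurableSet S) (hr : 0 ≤ r) (hsub : Ioo (p - r) (p + r) ⊆ S)
    (hu : support u ⊆ Ioo (p - r) (p + r)) (huD : ∀ x, ‖u x‖ ≤ D)
    (hg : ∀ x ∈ Ioo (p - r) (p + r), ‖g x‖ ≤ H) (hH : 0 ≤ H) :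
    ‖∫ x in S, ((x : ℂ) - p) ^ k * g x * u x‖ ≤ r ^ k * H * D * (2 * r) := by
  refine norm_setIntegral_le_of_eq_zero_off_Ioo hS hr hsub (fun x hx => ?_) fun x hx => ?_
  · rw [notMem_support.mp fun h => hx (hu h), mul_zero]
  · have hxp : ‖(x : ℂ) - p‖ ≤ r := by
      rw [← Complex.ofReal_sub, Complex.norm_real, Real.norm_eq_abs, abs_le]
      constructor <;> linarith [hx.1, hx.2]
    rw [norm_mul, norm_mul, norm_pow]
    gcongr
    exacts [hg x hx, huD x]

theorem norm_sum_pow_mul_mul_iteratedDeriv_le {ψ : ℝ → ℂ} {h : ℕ → ℝ → ℂ} {S : Set ℝ}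
    {p r : ℝ} {H D : ℕ → ℝ} (m J : ℕ) (hS : MeasurableSet S) (hr : 0 ≤ r)
    (hsub : Ioo (p - r) (p + r) ⊆ S) (hψ : tsupport ψ ⊆ Ioo (p - r) (p + r))
    (hD : ∀ j x, ‖iteratedDeriv j ψ x‖ ≤ D j) (hH0 : ∀ j, 0 ≤ H j)
    (hH : ∀ j ≤ J, ∀ x ∈ Ioo (p - r) (p + r), ‖h j x‖ ≤ H j) :
    ‖∑ j ∈ Finset.range (J + 1), (-1 : ℂ) ^ j *
        ∫ x in S, ((x : ℂ) - p) ^ (m + j) * h j x * iteratedDeriv j ψ x‖ ≤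
      ∑ j ∈ Finset.range (J + 1), r ^ (m + j) * H j * D j * (2 * r) := by
  refine norm_sum_le_of_le _ fun j hj => ?_
  rw [norm_mul, norm_pow, norm_neg, norm_one, one_pow, one_mul]
  exact norm_setIntegral_pow_mul_mul_le _ hS hr hsub
    ((support_iteratedDeriv_subset j).trans hψ) (hD j) (hH j (Finset.mem_range_succ_iff.mp hj))
    (hH0 j)

theorem exists_nonneg_bounds_of_forall_le {α E : Type*} [Norm E] {h : ℕ → α → E} {K : Set α}
    {J : ℕ} (hh : ∀ j ≤ J, ∃ C, ∀ x ∈ K, ‖h j x‖ ≤ C) :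
    ∃ H : ℕ → ℝ, (∀ j, 0 ≤ H j) ∧ ∀ j ≤ J, ∀ x ∈ K, ‖h j x‖ ≤ H j := by
  have : ∀ j, ∃ C, 0 ≤ C ∧ (j ≤ J → ∀ x ∈ K, ‖h j x‖ ≤ C) := fun j => by
    by_cases hj : j ≤ J
    · obtain ⟨C, hC⟩ := hh j hj
      exact ⟨max C 0, le_max_right _ _, fun _ x hx => (hC x hx).trans (le_max_left _ _)⟩
    · exact ⟨0, le_rfl, fun h => absurd h hj⟩
  choose H hH0 hH using this
  exact ⟨H, hH0, fun j hj => hH j hj⟩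

theorem div_pow_mul_mul_pow_mul_two_mul_div {c T H c₂ : ℝ} (m j : ℕ) (hT : T ≠ 0) :
    (c / T) ^ (m + j) * H * (c₂ * T ^ (j + 1)) * (2 * (c / T)) =
      2 * c ^ (m + j + 1) * H * c₂ / T ^ m := by
  rw [div_pow, pow_add T, pow_succ]
  field_simp
  ring

/-- If a distribution `σ` vanishes to order `m ≥ 0` at `p` and
`(φ_T)_{T>0}` is a family of smooth functions supported in `(p - c₁/T, p + c₁/T)`
whose `j`-th derivatives are uniformly bounded by `c_{2,j} T^{j+1}`, then
`|σ(φ_T)| ≤ C T^{-m}` for all sufficiently large `T`. -/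
theorem vanishing_order_pairing_bound
    (σ : (ℝ → ℂ) → ℂ) (m : ℕ) (p : ℝ) (hσ : VanishesToOrder σ m p)
    (c₁ : ℝ) (hc₁ : 0 < c₁) (φ : ℝ → ℝ → ℂ)
    (hφ : ∀ T : ℝ, 0 < T → ContDiff ℝ (⊤ : ℕ∞) (φ T) ∧ HasCompactSupport (φ T) ∧
      tsupport (φ T) ⊆ Set.Ioo (p - c₁ / T) (p + c₁ / T))
    (hder : ∀ j : ℕ, ∃ c₂ : ℝ, 0 < c₂ ∧ ∀ T : ℝ, 0 < T →
      ∀ x : ℝ, ‖iteratedDeriv j (φ T) x‖ ≤ c₂ * T ^ (j + 1)) :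
    ∃ C : ℝ, 0 < C ∧ ∃ T₀ : ℝ, 0 < T₀ ∧ ∀ T : ℝ, T₀ ≤ T → ‖σ (φ T)‖ ≤ C / T ^ m := by
  obtain ⟨δ, hδ, J, h, hh, hrep⟩ := hσ
  choose c₂ hc₂ hder using hder
  obtain ⟨H, hH0, hH⟩ := exists_nonneg_bounds_of_forall_le (K := Icc (p - δ / 2) (p + δ / 2))
    fun j hj => (hh j hj).2 _ isCompact_Icc (Icc_subset_Ioo (by linarith) (by linarith))
  set A := ∑ j ∈ Finset.range (J + 1), 2 * c₁ ^ (m + j + 1) * H j * c₂ j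
  have hA : 0 ≤ A := Finset.sum_nonneg fun j _ => by
    have := hH0 j; have := (hc₂ j).le; positivity
  refine ⟨A + 1, by linarith, 2 * c₁ / δ, by positivity, fun T hT => ?_⟩
  have hT0 : 0 < T := (by positivity : 0 < 2 * c₁ / δ).trans_le hT
  have hr : c₁ / T ≤ δ / 2 := by
    rw [div_le_iff₀ hδ] at hT
    rw [div_le_iff₀ hT0]
    linarith
  obtain ⟨hsmooth, hcpt, hsupp⟩ := hφ T hT0
  have hball : Ioo (p - c₁ / T) (p + c₁ / T) ⊆ Ioo (p - δ) (p + δ) :=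
    Ioo_subset_Ioo (by linarith) (by linarith)
  rw [hrep _ hsmooth hcpt (hsupp.trans hball)]
  calc _ ≤ ∑ j ∈ Finset.range (J + 1),
          (c₁ / T) ^ (m + j) * H j * (c₂ j * T ^ (j + 1)) * (2 * (c₁ / T)) :=
        norm_sum_pow_mul_mul_iteratedDeriv_le m J measurableSet_Ioo (by positivity) hball hsupp
          (fun j => hder j T hT0) hH0 fun j hj x hx =>
            hH j hj x (Ioo_subset_Icc_self.trans (Icc_subset_Icc (by linarith) (by linarith)) hx)
    _ = A / T ^ m := by
      rw [Finset.sum_div]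
      exact Finset.sum_congr rfl fun j _ => div_pow_mul_mul_pow_mul_two_mul_div m j hT0.ne'
    _ ≤ (A + 1) / T ^ m := by gcongr; linarith
end
end

section
/- Let k be an even positive integer, N a positive integer, p, q coprime integers with q > 0 and N | q, and let p̃ be an integer with p·p̃ ≡ 1 (mod q). Let f be a cusp form of weight k for Γ₀(N) with normalized Fourier coefficients a_n. Then there exist entire functions F, G : ℂ → ℂ such that F(s) = q^s G₀(s) Σ_{n≥1} a_n e(np/q) n^{−s+(k−1)/2} and G(s) = q^s G₀(s) Σ_{n≥1} a_n e(−n p̃/q) n^{−s+(k−1)/2} for every s with Re s > α + (k+1)/2, and such that F(s) = G(k − s) for all s ∈ ℂ. -/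
open MeasureTheory Set

noncomputable section

/-- `G₀(s) = 2(2π)^{-s}Γ(s)cos(πs/2)`. -/
def G0 (s : ℂ) : ℂ :=
  2 * ((2 * Real.pi : ℝ) : ℂ) ^ (-s) * Complex.Gamma s * Complex.cos (Real.pi * s / 2)

/-- A cusp form of weight `k` for `Γ₀(N)` with normalized Fourier coefficients `a`:
holomorphic on the upper half-plane, automorphic of weight `k` under `Γ₀(N)`,
with `(Im z)^{k/2}|f(z)|` bounded, and Fourier expansion
`f(z) = Σ_{n≥1} a_n n^{(k-1)/2} e(nz)`. -/
def IsCuspForm (k N : ℕ) (f : ℂ → ℂ) (a : ℕ → ℂ) : Prop :=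
  DifferentiableOn ℂ f {z : ℂ | 0 < z.im} ∧
  (∀ A B C D : ℤ, A * D - B * C = 1 → (N : ℤ) ∣ C → ∀ z : ℂ, 0 < z.im →
    f ((A * z + B) / (C * z + D)) = (C * z + D) ^ k * f z) ∧
  (∃ M : ℝ, ∀ z : ℂ, 0 < z.im → z.im ^ ((k : ℝ) / 2) * ‖f z‖ ≤ M) ∧
  (∀ z : ℂ, 0 < z.im →
    HasSum (fun n : ℕ =>
      a (n + 1) * ((n : ℂ) + 1) ^ (((k : ℂ) - 1) / 2) * e2 (((n : ℂ) + 1) * z)) (f z))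

/-!
Hecke's argument along the vertical lines through `p/q` and `-p̃/q`. The matrix `(p b; q p̃)`
lies in `Γ₀(N)` and maps `(-p̃ + it)/q` to `(p + i/t)/q` with automorphy factor `(it)^k`, so
`t ↦ f((p + it)/q)` and `t ↦ f((-p̃ + it)/q)` satisfy `φ(1/t) = i^k t^k ψ(t)`. The Fourier
expansion with polynomially bounded coefficients makes both decay exponentially as `t → ∞`, so
they form a strong FE pair: their Mellin transforms `Λ` and `Λ'` are entire, satisfy
`Λ(s) = i^k Λ'(k - s)`, and for large `Re s` equal `q^s (2π)^{-s} Γ(s)` times the twisted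
Dirichlet series. Finally `cos(π(k - s)/2) = i^k cos(πs/2)` for even `k`, so
`F = 2 cos(πs/2) Λ` and `G = 2 cos(πs/2) Λ'` satisfy `F(s) = G(k - s)`.
-/

open Real Filter Asymptotics Complex

/-- The series is `O(e^{-δ t})` as `t → ∞`, because `pᵢ t ≥ pᵢ + δ (t - 1)` for `t ≥ 1`. -/
lemma isBigO_rpow_atTop_of_hasSum_exp_neg {ι : Type*} {c : ι → ℂ} {p : ι → ℝ} {δ : ℝ}
    (hδ : 0 < δ) (hp : ∀ i, δ ≤ p i) (hc : Summable fun i ↦ ‖c i‖ * rexp (-p i))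
    {H : ℝ → ℂ} (hH : ∀ t > 0, HasSum (fun i ↦ c i * rexp (-p i * t)) (H t)) (r : ℝ) :
    H =O[atTop] (· ^ r) := by
  have hbound : ∀ t ≥ 1, ‖H t‖ ≤ (∑' i, ‖c i‖ * rexp (-p i)) * rexp δ * rexp (-δ * t) := by
    intro t ht
    have hsum := (hc.hasSum.mul_right (rexp δ * rexp (-δ * t)))
    refine (hH t (by linarith)).norm_le_of_bounded (by simpa only [mul_assoc] using hsum) fun i ↦ ?_
    rw [norm_mul, Complex.norm_real, Real.norm_of_nonneg (Real.exp_pos _).le]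
    gcongr
    rw [← Real.exp_add, ← Real.exp_add]
    gcongr
    nlinarith [hp i]
  refine IsBigO.trans ?_ (isLittleO_exp_neg_mul_rpow_atTop hδ r).isBigO
  refine IsBigO.of_bound ((∑' i, ‖c i‖ * rexp (-p i)) * rexp δ) ?_
  filter_upwards [eventually_ge_atTop 1] with t ht
  rw [Real.norm_of_nonneg (Real.exp_pos _).le]
  exact hbound t ht

section ExponentialSeries

variable {c : ℕ → ℂ} {C β : ℝ}

lemma summable_norm_div_rpow_of_norm_le (hc : ∀ n, ‖c n‖ ≤ C * ((n : ℝ) + 1) ^ β) {σ : ℝ}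
    (hσ : β + 1 < σ) : Summable fun n : ℕ ↦ ‖c n‖ / ((n : ℝ) + 1) ^ σ := by
  have hmaj : Summable fun n : ℕ ↦ C * ((n : ℝ) + 1) ^ (β - σ) := by
    have := (summable_nat_add_iff 1).mpr (Real.summable_nat_rpow.mpr (by linarith : β - σ < -1))
    exact (this.congr fun n ↦ by push_cast; rfl).mul_left C
  refine hmaj.of_nonneg_of_le (fun n ↦ by positivity) fun n ↦ ?_
  rw [Real.rpow_sub (by positivity), ← mul_div_assoc]
  gcongr
  exact hc n

lemma summable_norm_mul_exp_neg_of_norm_le (hc : ∀ n, ‖c n‖ ≤ C * ((n : ℝ) + 1) ^ β) {d : ℝ}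
    (hd : 0 < d) : Summable fun n : ℕ ↦ ‖c n‖ * rexp (-(d * ((n : ℝ) + 1))) := by
  have hmaj : Summable fun n : ℕ ↦ C * (((n + 1 : ℕ) : ℝ) ^ ⌈β⌉₊ * rexp (-d * (n + 1 : ℕ))) :=
    ((summable_nat_add_iff 1).mpr (Real.summable_pow_mul_exp_neg_nat_mul ⌈β⌉₊ hd)).mul_left C
  refine hmaj.of_nonneg_of_le (fun n ↦ by positivity) fun n ↦ ?_
  have hC : 0 ≤ C := by
    simpa using (norm_nonneg _).trans (hc 0)
  push_cast
  rw [neg_mul, ← mul_assoc, ← Real.rpow_natCast]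
  gcongr
  refine (hc n).trans ?_
  gcongr
  · linarith [n.cast_nonneg (α := ℝ)]
  · exact Nat.le_ceil β

lemma mellin_eq_tsum_of_hasSum_exp_neg (hc : ∀ n, ‖c n‖ ≤ C * ((n : ℝ) + 1) ^ β) {d : ℝ}
    (hd : 0 < d) {H : ℝ → ℂ}
    (hH : ∀ t > 0, HasSum (fun n : ℕ ↦ c n * rexp (-(d * ((n : ℝ) + 1)) * t)) (H t))
    {s : ℂ} (hs₀ : 0 < s.re) (hs : β + 1 < s.re) :
    mellin H s = (d : ℂ) ^ (-s) * Gamma s * ∑' n : ℕ, c n * ((n : ℂ) + 1) ^ (-s) := by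
  have hsum : Summable fun n : ℕ ↦ ‖c n‖ / (d * ((n : ℝ) + 1)) ^ s.re := by
    refine ((summable_norm_div_rpow_of_norm_le hc hs).div_const (d ^ s.re)).congr fun n ↦ ?_
    rw [Real.mul_rpow hd.le (by positivity), div_div, mul_comm]
  have hmellin := hasSum_mellin (p := fun n : ℕ ↦ d * ((n : ℝ) + 1))
    (fun n ↦ Or.inr (by positivity)) hs₀ hH hsum
  rw [← hmellin.tsum_eq, ← tsum_mul_left]
  refine tsum_congr fun n ↦ ?_
  rw [ofReal_mul, mul_cpow_ofReal_nonneg hd.le (by positivity), cpow_neg, cpow_neg]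
  push_cast
  ring

end ExponentialSeries

lemma norm_e2_ofReal (x : ℝ) : ‖e2 x‖ = 1 := by
  simp [e2, Complex.norm_exp]

lemma e2_mul_intCast_add_mul_I_div (n : ℕ) (r q : ℤ) (t : ℝ) :
    e2 (((n : ℂ) + 1) * ((r + t * I) / q)) =
      e2 (((n : ℂ) + 1) * r / q) * rexp (-(2 * π / q * ((n : ℝ) + 1)) * t) := by
  rw [e2, e2, ofReal_exp, ← Complex.exp_add]
  congr 1
  push_cast
  linear_combination (2 * π * ((n : ℂ) + 1) * t / q) * I_sq

lemma im_intCast_add_mul_I_div_pos {q : ℤ} (hq : 0 < q) (r : ℤ) {t : ℝ} (ht : 0 < t) :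
    0 < ((r + t * I) / q : ℂ).im := by
  have : ((r + t * I) / q : ℂ).im = t / q := by
    simp [div_intCast_im]
  rw [this]
  exact div_pos ht (by exact_mod_cast hq)

/-- The Fourier coefficients of `t ↦ f((r + it)/q)` with respect to `e^{-2π(n+1)t/q}`. -/
def twistCoeff (k : ℕ) (a : ℕ → ℂ) (r q : ℤ) (n : ℕ) : ℂ :=
  a (n + 1) * e2 (((n : ℂ) + 1) * r / q) * ((n : ℂ) + 1) ^ (((k : ℂ) - 1) / 2)

lemma norm_twistCoeff_le {k : ℕ} {a : ℕ → ℂ} {C α : ℝ}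
    (hbd : ∀ n : ℕ, ‖a (n + 1)‖ ≤ C * ((n : ℝ) + 1) ^ α) (r q : ℤ) (n : ℕ) :
    ‖twistCoeff k a r q n‖ ≤ C * ((n : ℝ) + 1) ^ (α + ((k : ℝ) - 1) / 2) := by
  have he : ‖e2 (((n : ℂ) + 1) * r / q)‖ = 1 := by
    simpa using norm_e2_ofReal (((n : ℝ) + 1) * r / q)
  have hpow : ‖((n : ℂ) + 1) ^ (((k : ℂ) - 1) / 2)‖ = ((n : ℝ) + 1) ^ (((k : ℝ) - 1) / 2) := by
    rw [← ofReal_natCast, ← ofReal_one, ← ofReal_add, norm_cpow_eq_rpow_re_of_pos (by positivity)]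
    norm_num
  rw [twistCoeff, norm_mul, norm_mul, he, hpow, mul_one, Real.rpow_add (by positivity), ← mul_assoc]
  gcongr
  exact hbd n

namespace IsCuspForm

variable {k N : ℕ} {f : ℂ → ℂ} {a : ℕ → ℂ} {q : ℤ}

lemma hasSum_twistCoeff (hf : IsCuspForm k N f a) (hq : 0 < q) (r : ℤ) {t : ℝ} (ht : 0 < t) :
    HasSum (fun n : ℕ ↦ twistCoeff k a r q n * rexp (-(2 * π / q * ((n : ℝ) + 1)) * t))
      (f ((r + t * I) / q)) := by
  convert hf.2.2.2 _ (im_intCast_add_mul_I_div_pos hq r ht) using 2 with n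
  rw [e2_mul_intCast_add_mul_I_div, twistCoeff]
  ring

lemma isBigO_rpow_atTop (hf : IsCuspForm k N f a) (hq : 0 < q) {C α : ℝ}
    (hbd : ∀ n : ℕ, ‖a (n + 1)‖ ≤ C * ((n : ℝ) + 1) ^ α) (r : ℤ) (ρ : ℝ) :
    (fun t : ℝ ↦ f ((r + t * I) / q)) =O[atTop] (· ^ ρ) := by
  have hd : 0 < 2 * π / q := div_pos Real.two_pi_pos (by exact_mod_cast hq)
  refine isBigO_rpow_atTop_of_hasSum_exp_neg hd (fun n ↦ ?_)
    (summable_norm_mul_exp_neg_of_norm_le (norm_twistCoeff_le hbd r q) hd)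
    (fun t ht ↦ hf.hasSum_twistCoeff hq r ht) ρ
  nlinarith [n.cast_nonneg (α := ℝ)]

lemma locallyIntegrableOn (hf : IsCuspForm k N f a) (hq : 0 < q) (r : ℤ) :
    LocallyIntegrableOn (fun t : ℝ ↦ f ((r + t * I) / q)) (Ioi 0) := by
  refine ContinuousOn.locallyIntegrableOn ?_ measurableSet_Ioi
  exact hf.1.continuousOn.comp (by fun_prop) fun t ht ↦ im_intCast_add_mul_I_div_pos hq r ht

/-- The matrix `(p b; q p̃) ∈ Γ₀(N)` maps `(-p̃ + xi)/q` to `(p + i/x)/q`, with automorphy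
factor `(q z + p̃)^k = (xi)^k`. -/
lemma apply_one_div (hf : IsCuspForm k N f a) (hq : 0 < q) (hNq : (N : ℤ) ∣ q) {p p' : ℤ}
    (hpp' : q ∣ p * p' - 1) {x : ℝ} (hx : 0 < x) :
    f ((p + ((1 / x : ℝ) : ℂ) * I) / q) = I ^ k * x ^ k * f ((((-p' : ℤ) : ℂ) + x * I) / q) := by
  obtain ⟨b, hb⟩ := hpp'
  have hqC : (q : ℂ) ≠ 0 := by exact_mod_cast hq.ne'
  have hxC : (x : ℂ) ≠ 0 := by exact_mod_cast hx.ne'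
  have hbC : (p : ℂ) * p' - 1 = q * b := by exact_mod_cast hb
  set z : ℂ := (((-p' : ℤ) : ℂ) + x * I) / q
  have hden : (q : ℂ) * z + p' = x * I := by
    simp only [z]
    push_cast
    field_simp
    ring
  have hnum : ((p : ℂ) * z + b) / (q * z + p') = (p + ((1 / x : ℝ) : ℂ) * I) / q := by
    rw [hden]
    simp only [z]
    push_cast
    field_simp
    linear_combination -hbC - I_sq
  have hmod := hf.2.1 p b q p' (by linarith) hNq z (im_intCast_add_mul_I_div_pos hq _ hx)
  rw [← hnum, hmod, hden, mul_pow]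
  ring

lemma mellin_eq_tsum (hf : IsCuspForm k N f a) (hq : 0 < q) {C α : ℝ}
    (hbd : ∀ n : ℕ, ‖a (n + 1)‖ ≤ C * ((n : ℝ) + 1) ^ α) (r : ℤ) {s : ℂ} (hs₀ : 0 < s.re)
    (hs : α + ((k : ℝ) + 1) / 2 < s.re) :
    mellin (fun t : ℝ ↦ f ((r + t * I) / q)) s = (q : ℂ) ^ s * ((2 * π : ℝ) : ℂ) ^ (-s) *
      Gamma s * ∑' n : ℕ, a (n + 1) * e2 (((n : ℂ) + 1) * r / q) *
        ((n : ℂ) + 1) ^ (-s + ((k : ℂ) - 1) / 2) := by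
  have hqR : (0 : ℝ) < q := by exact_mod_cast hq
  rw [mellin_eq_tsum_of_hasSum_exp_neg (norm_twistCoeff_le hbd r q) (by positivity)
    (fun t ht ↦ hf.hasSum_twistCoeff hq r ht) hs₀ (by linarith), ofReal_div,
    div_cpow_ofReal_nonneg (by positivity) hqR.le, cpow_neg (q : ℝ), div_inv_eq_mul]
  congr 1
  · push_cast
    ring
  · refine tsum_congr fun n ↦ ?_
    rw [twistCoeff, cpow_add _ _ (Nat.cast_add_one_ne_zero n)]
    ring

section twistFEPair

variable (hf : IsCuspForm k N f a) (hk : 0 < k) (hq : 0 < q) (hNq : (N : ℤ) ∣ q) {p p' : ℤ}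
  (hpp' : q ∣ p * p' - 1) {C α : ℝ} (hbd : ∀ n : ℕ, ‖a (n + 1)‖ ≤ C * ((n : ℝ) + 1) ^ α)

def twistFEPair : WeakFEPair ℂ where
  f t := f ((p + t * I) / q)
  g t := f ((((-p' : ℤ) : ℂ) + t * I) / q)
  k := k
  ε := I ^ k
  f₀ := 0
  g₀ := 0
  hf_int := hf.locallyIntegrableOn hq p
  hg_int := hf.locallyIntegrableOn hq (-p')
  hk := by exact_mod_cast hk
  hε := pow_ne_zero _ I_ne_zero
  h_feq x hx := by
    rw [hf.apply_one_div hq hNq hpp' hx, smul_eq_mul, Real.rpow_natCast, ofReal_pow]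
  hf_top ρ := by simpa using hf.isBigO_rpow_atTop hq hbd p ρ
  hg_top ρ := by simpa using hf.isBigO_rpow_atTop hq hbd (-p') ρ

lemma isStrongFEPair_twistFEPair :
    IsStrongFEPair (hf.twistFEPair hk hq hNq hpp' hbd) :=
  ⟨rfl, rfl⟩

lemma twistFEPair_Λ_eq {s : ℂ} (hs₀ : 0 < s.re) (hs : α + ((k : ℝ) + 1) / 2 < s.re) :
    (hf.twistFEPair hk hq hNq hpp' hbd).Λ s = (q : ℂ) ^ s * ((2 * π : ℝ) : ℂ) ^ (-s) *
      Gamma s * ∑' n : ℕ, a (n + 1) * e2 (((n : ℂ) + 1) * p / q) *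
        ((n : ℂ) + 1) ^ (-s + ((k : ℂ) - 1) / 2) := by
  rw [(hf.isStrongFEPair_twistFEPair hk hq hNq hpp' hbd).Λ_eq]
  exact hf.mellin_eq_tsum hq hbd p hs₀ hs

lemma twistFEPair_symm_Λ_eq {s : ℂ} (hs₀ : 0 < s.re) (hs : α + ((k : ℝ) + 1) / 2 < s.re) :
    (hf.twistFEPair hk hq hNq hpp' hbd).symm.Λ s = (q : ℂ) ^ s * ((2 * π : ℝ) : ℂ) ^ (-s) *
      Gamma s * ∑' n : ℕ, a (n + 1) * e2 (-(((n : ℂ) + 1) * p') / q) *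
        ((n : ℂ) + 1) ^ (-s + ((k : ℂ) - 1) / 2) := by
  rw [(hf.isStrongFEPair_twistFEPair hk hq hNq hpp' hbd).symm.Λ_eq]
  refine (hf.mellin_eq_tsum hq hbd (-p') hs₀ hs).trans ?_
  simp only [Int.cast_neg, mul_neg, neg_div]

lemma twistFEPair_Λ_eq_symm_Λ (s : ℂ) :
    (hf.twistFEPair hk hq hNq hpp' hbd).Λ s =
      I ^ k * (hf.twistFEPair hk hq hNq hpp' hbd).symm.Λ (k - s) := by
  convert (hf.twistFEPair hk hq hNq hpp' hbd).functional_equation (k - s) using 2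
  · simp [twistFEPair]
  · rfl

end twistFEPair

end IsCuspForm

lemma Complex.cos_nat_mul_pi_sub (x : ℂ) (m : ℕ) : cos (m * π - x) = (-1) ^ m * cos x := by
  induction m with
  | zero => simp
  | succ m ih =>
    rw [show ((m + 1 : ℕ) : ℂ) * π - x = (m * π - x) + π by push_cast; ring, cos_add_pi, ih,
      pow_succ]
    ring

lemma cos_pi_mul_sub_div_two {k : ℕ} (hk : Even k) (s : ℂ) :
    cos (π * (k - s) / 2) = I ^ k * cos (π * s / 2) := by
  obtain ⟨m, rfl⟩ := hk
  rw [show (π : ℂ) * ((m + m : ℕ) - s) / 2 = m * π - π * s / 2 by push_cast; ring,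
    Complex.cos_nat_mul_pi_sub, ← two_mul, pow_mul, I_sq]

theorem twisted_functional_equation_integral_weight_general
    (k N : ℕ) (hk : 0 < k) (hkeven : Even k)
    (p q : ℤ) (hq : 0 < q) (hNq : (N : ℤ) ∣ q)
    (ptilde : ℤ) (hpt : q ∣ p * ptilde - 1)
    (f : ℂ → ℂ) (a : ℕ → ℂ) (α : ℝ) (hα : 0 < α)
    (hf : IsCuspForm k N f a)
    (hbd : ∃ C : ℝ, ∀ n : ℕ, ‖a (n + 1)‖ ≤ C * ((n : ℝ) + 1) ^ α) :
    ∃ F G : ℂ → ℂ, Differentiable ℂ F ∧ Differentiable ℂ G ∧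
      (∀ s : ℂ, α + ((k : ℝ) + 1) / 2 < s.re →
        F s = (q : ℂ) ^ s * G0 s * ∑' n : ℕ,
          a (n + 1) * e2 ((((n : ℂ) + 1) * (p : ℂ)) / (q : ℂ)) *
            ((n : ℂ) + 1) ^ (-s + ((k : ℂ) - 1) / 2)) ∧
      (∀ s : ℂ, α + ((k : ℝ) + 1) / 2 < s.re →
        G s = (q : ℂ) ^ s * G0 s * ∑' n : ℕ,
          a (n + 1) * e2 (-(((n : ℂ) + 1) * (ptilde : ℂ)) / (q : ℂ)) *
            ((n : ℂ) + 1) ^ (-s + ((k : ℂ) - 1) / 2)) ∧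
      ∀ s : ℂ, F s = G ((k : ℂ) - s) := by
  obtain ⟨C, hC⟩ := hbd
  have hP := hf.isStrongFEPair_twistFEPair hk hq hNq hpt hC
  have hΛ (s : ℂ) := hf.twistFEPair_Λ_eq hk hq hNq hpt hC (s := s)
  have hΛsymm (s : ℂ) := hf.twistFEPair_symm_Λ_eq hk hq hNq hpt hC (s := s)
  have hfeq := hf.twistFEPair_Λ_eq_symm_Λ hk hq hNq hpt hC
  set P := hf.twistFEPair hk hq hNq hpt hC
  have hcos : Differentiable ℂ fun s : ℂ ↦ 2 * cos (π * s / 2) := by fun_prop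
  have hre {s : ℂ} (hs : α + ((k : ℝ) + 1) / 2 < s.re) : 0 < s.re := by
    have : (1 : ℝ) ≤ k := by exact_mod_cast hk
    linarith
  refine ⟨fun s ↦ 2 * cos (π * s / 2) * P.Λ s, fun s ↦ 2 * cos (π * s / 2) * P.symm.Λ s,
    hcos.mul hP.differentiable_Λ, hcos.mul hP.symm.differentiable_Λ, fun s hs ↦ ?_,
    fun s hs ↦ ?_, fun s ↦ ?_⟩
  · beta_reduce
    rw [hΛ s (hre hs) hs, G0]
    ring
  · beta_reduce
    rw [hΛsymm s (hre hs) hs, G0]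
    ring
  · beta_reduce
    rw [hfeq, cos_pi_mul_sub_div_two hkeven]
    ring

/-- Functional equation: for `f` a cusp form of even weight `k` for
`Γ₀(N)`, `p/q` with `N ∣ q` and `p·p̃ ≡ 1 (mod q)`, the completed twisted `L`-functions
`F(s) = q^s G₀(s) Σ a_n e(np/q) n^{-s+(k-1)/2}` and
`G(s) = q^s G₀(s) Σ a_n e(-np̃/q) n^{-s+(k-1)/2}` extend to entire functions satisfying
`F(s) = G(k - s)`. -/
theorem twisted_functional_equation_integral_weight
    (k N : ℕ) (hk : 0 < k) (hkeven : Even k) (hN : 0 < N)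
    (p q : ℤ) (hq : 0 < q) (hcop : IsCoprime p q) (hNq : (N : ℤ) ∣ q)
    (ptilde : ℤ) (hpt : q ∣ p * ptilde - 1)
    (f : ℂ → ℂ) (a : ℕ → ℂ) (α : ℝ) (hα : 0 < α)
    (hf : IsCuspForm k N f a)
    (hbd : ∃ C : ℝ, ∀ n : ℕ, ‖a (n + 1)‖ ≤ C * ((n : ℝ) + 1) ^ α) :
    ∃ F G : ℂ → ℂ, Differentiable ℂ F ∧ Differentiable ℂ G ∧
      (∀ s : ℂ, α + ((k : ℝ) + 1) / 2 < s.re →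
        F s = (q : ℂ) ^ s * G0 s * ∑' n : ℕ,
          a (n + 1) * e2 ((((n : ℂ) + 1) * (p : ℂ)) / (q : ℂ)) *
            ((n : ℂ) + 1) ^ (-s + ((k : ℂ) - 1) / 2)) ∧
      (∀ s : ℂ, α + ((k : ℝ) + 1) / 2 < s.re →
        G s = (q : ℂ) ^ s * G0 s * ∑' n : ℕ,
          a (n + 1) * e2 (-(((n : ℂ) + 1) * (ptilde : ℂ)) / (q : ℂ)) *
            ((n : ℂ) + 1) ^ (-s + ((k : ℂ) - 1) / 2)) ∧
      ∀ s : ℂ, F s = G ((k : ℂ) - s) :=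
  twisted_functional_equation_integral_weight_general k N hk hkeven p q hq hNq ptilde hpt f a α hα
    hf hbd
end
end

section
/- For every T > 0 and every t ∈ ℝ, the value u_T(t) is a real number satisfying 0 ≤ u_T(t) ≤ 4. -/
open MeasureTheory Set

noncomputable section

/-- `φ₀` is a smooth even bump function supported in `[-1,1]` with `0 ≤ φ₀ ≤ 1`,
`φ₀(0) = 1` and `∫ φ₀² = 1`. -/
def IsBumpBase (φ₀ : ℝ → ℝ) : Prop :=
  ContDiff ℝ (⊤ : ℕ∞) φ₀ ∧ (∀ x, φ₀ (-x) = φ₀ x) ∧ tsupport φ₀ ⊆ Set.Icc (-1) 1 ∧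
  (∀ x, 0 ≤ φ₀ x ∧ φ₀ x ≤ 1) ∧ φ₀ 0 = 1 ∧ (∫ u : ℝ, (φ₀ u) ^ 2) = 1

/-- `ψ(x) = φ₀(log x)`. -/
def psiF (φ₀ : ℝ → ℝ) (x : ℝ) : ℝ := φ₀ (Real.log x)

/-- `λ(x) = ∫₀^∞ ψ(y)ψ(x/y) dy/y`. -/
def lamF (φ₀ : ℝ → ℝ) (x : ℝ) : ℝ :=
  ∫ y in Set.Ioi (0 : ℝ), psiF φ₀ y * psiF φ₀ (x / y) / y

/-- `λ_T(x) = T x^{-2iT^{3/2}} λ(x^T)`. -/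
def lamT (φ₀ : ℝ → ℝ) (T x : ℝ) : ℂ :=
  (T : ℂ) * (x : ℂ) ^ (-(2 * Complex.I * ((T ^ ((3 : ℝ) / 2) : ℝ) : ℂ))) * (lamF φ₀ (x ^ T) : ℂ)

/-- `u_T(t) = ∫₀^∞ λ_T(x) x^{it-1} dx`. -/
def uT (φ₀ : ℝ → ℝ) (T t : ℝ) : ℂ :=
  ∫ x in Set.Ioi (0 : ℝ), lamT φ₀ T x * (x : ℂ) ^ (Complex.I * (t : ℂ) - 1)

/-! Substituting `x = e^u` turns the Mellin transform `u_T(t)` into a Fourier transform of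
`u ↦ λ(e^u)`, evaluated at a real frequency determined by `T` and `t`. Since `λ(e^u)` is the
self-convolution `φ₀ ⋆ φ₀`, this equals `(𝓕 φ₀)(ξ)²`. The Fourier transform of the even real
function `φ₀` is real, and it is bounded by `∫ |φ₀| ≤ 2`, so its square lies in `[0, 4]`. -/

open FourierTransform Convolution Complex ComplexConjugate

theorem fourier_comp_neg {E : Type*} [NormedAddCommGroup E] [NormedSpace ℂ E]
    (f : ℝ → E) (ξ : ℝ) : 𝓕 (fun x ↦ f (-x)) ξ = 𝓕 f (-ξ) := by
  rw [← Real.fourierInv_eq_fourier_comp_neg, Real.fourierInv_eq_fourier_neg]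

theorem conj_fourier_ofReal (f : ℝ → ℝ) (ξ : ℝ) :
    conj (𝓕 (fun x ↦ (f x : ℂ)) ξ) = 𝓕 (fun x ↦ (f x : ℂ)) (-ξ) := by
  simp only [Real.fourier_real_eq_integral_exp_smul, ← integral_conj, smul_eq_mul, map_mul,
    conj_ofReal, ← Complex.exp_conj, conj_I]
  congr 1; funext v; congr 2; push_cast; ring

theorem fourier_ofReal_im_eq_zero_of_even {f : ℝ → ℝ} (hf : ∀ x, f (-x) = f x) (ξ : ℝ) :
    (𝓕 (fun x ↦ (f x : ℂ)) ξ).im = 0 := by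
  rw [← conj_eq_iff_im, conj_fourier_ofReal, ← fourier_comp_neg]
  simp only [hf]

theorem mellin_I_mul_eq_fourier {E : Type*} [NormedAddCommGroup E] [NormedSpace ℂ E]
    (f : ℝ → E) (s : ℝ) :
    mellin f (I * s) = 𝓕 (fun u ↦ f (Real.exp u)) (-(s / (2 * Real.pi))) := by
  rw [mellin_eq_fourier, ← fourier_comp_neg]
  simp

theorem integral_norm_le_of_tsupport_subset_Icc {E : Type*} [NormedAddCommGroup E]
    {f : ℝ → E} {a b C : ℝ} (hab : a ≤ b) (hsupp : tsupport f ⊆ Icc a b)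
    (hC : ∀ x, ‖f x‖ ≤ C) : ∫ x, ‖f x‖ ≤ C * (b - a) := by
  rw [← setIntegral_eq_integral_of_forall_compl_eq_zero (s := Icc a b) fun x hx ↦ by
    simp [image_eq_zero_of_notMem_tsupport (fun h ↦ hx (hsupp h))]]
  calc ∫ x in Icc a b, ‖f x‖ ≤ ‖∫ x in Icc a b, ‖f x‖‖ := le_abs_self _
    _ ≤ C * volume.real (Icc a b) :=
      norm_setIntegral_le_of_norm_le_const measure_Icc_lt_top fun x _ ↦ by simpa using hC x
    _ = C * (b - a) := by rw [Real.volume_real_Icc_of_le hab]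

theorem integral_Ioi_zero_eq_integral_exp_smul {E : Type*} [NormedAddCommGroup E]
    [NormedSpace ℝ E] (g : ℝ → E) :
    ∫ x in Ioi 0, g x = ∫ v, Real.exp v • g (Real.exp v) := by
  have h := integral_image_eq_integral_abs_deriv_smul MeasurableSet.univ
    (fun x _ ↦ (Real.hasDerivAt_exp x).hasDerivWithinAt) Real.exp_injective.injOn g
  simpa [Real.range_exp, abs_of_pos (Real.exp_pos _)] using h

theorem lamF_exp_eq_convolution (φ₀ : ℝ → ℝ) (v : ℝ) :
    (lamF φ₀ (Real.exp v) : ℂ) =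
      ((fun x ↦ (φ₀ x : ℂ)) ⋆[ContinuousLinearMap.mul ℂ ℂ] fun x ↦ (φ₀ x : ℂ)) v := by
  rw [lamF, integral_Ioi_zero_eq_integral_exp_smul, convolution, ← integral_complex_ofReal]
  congr 1; funext w
  rw [psiF, psiF, ← Real.exp_sub, Real.log_exp, Real.log_exp, smul_eq_mul]
  field_simp
  simp only [ofReal_mul, ContinuousLinearMap.mul_apply']

theorem uT_eq_mellin_lamF (φ₀ : ℝ → ℝ) {T : ℝ} (hT : 0 < T) (t : ℝ) :
    uT φ₀ T t =
      mellin (fun x ↦ (lamF φ₀ x : ℂ)) (I * ↑((t - 2 * T ^ ((3 : ℝ) / 2)) / T)) := by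
  have hT' : (T : ℂ) ≠ 0 := ofReal_ne_zero.2 hT.ne'
  have hlamT : lamT φ₀ T = fun x : ℝ ↦ (T : ℂ) •
      ((x : ℂ) ^ (-(2 * I * ((T ^ ((3 : ℝ) / 2) : ℝ) : ℂ))) • (lamF φ₀ (x ^ T) : ℂ)) := by
    funext x; simp only [lamT, smul_eq_mul, mul_assoc]
  have huT : uT φ₀ T t = mellin (lamT φ₀ T) (I * t) := by
    simp only [uT, mellin, smul_eq_mul, mul_comm]
  rw [huT, hlamT, mellin_const_smul, mellin_cpow_smul,
    mellin_comp_rpow (fun x ↦ (lamF φ₀ x : ℂ)), abs_of_pos hT, ← coe_smul, smul_smul,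
    ofReal_inv, mul_inv_cancel₀ hT', one_smul]
  congr 1
  push_cast
  field_simp
  ring

theorem mul_self_bounds_of_im_eq_zero {z : ℂ} {c : ℝ} (hz : z.im = 0) (hc : ‖z‖ ≤ c) :
    (z * z).im = 0 ∧ 0 ≤ (z * z).re ∧ (z * z).re ≤ c ^ 2 := by
  have hre : |z.re| ≤ c := (abs_re_le_norm z).trans hc
  simp only [mul_im, mul_re, hz, mul_zero, zero_mul, add_zero, sub_zero]
  refine ⟨trivial, mul_self_nonneg _, ?_⟩
  rw [← abs_mul_abs_self, ← sq]
  exact pow_le_pow_left₀ (abs_nonneg _) hre 2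

/-- For every `T > 0` and `t ∈ ℝ`, `u_T(t)` is real and
`0 ≤ u_T(t) ≤ 4`. -/
theorem uT_real_and_bounded
    (φ₀ : ℝ → ℝ) (hφ₀ : IsBumpBase φ₀) (T t : ℝ) (hT : 0 < T) :
    (uT φ₀ T t).im = 0 ∧ 0 ≤ (uT φ₀ T t).re ∧ (uT φ₀ T t).re ≤ 4 := by
  obtain ⟨hsmooth, heven, hsupp, hbd, -, -⟩ := hφ₀
  set Φ : ℝ → ℂ := fun x ↦ (φ₀ x : ℂ)
  have hΦsupp : tsupport Φ ⊆ Icc (-1) 1 := (tsupport_comp_subset ofReal_zero _).trans hsupp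
  have hΦ : Integrable Φ :=
    (continuous_ofReal.comp hsmooth.continuous).integrable_of_hasCompactSupport
      (isCompact_Icc.of_isClosed_subset (isClosed_tsupport _) hΦsupp)
  set ξ := -((t - 2 * T ^ ((3 : ℝ) / 2)) / T / (2 * Real.pi))
  have hu : uT φ₀ T t = 𝓕 Φ ξ * 𝓕 Φ ξ := by
    rw [uT_eq_mellin_lamF φ₀ hT, mellin_I_mul_eq_fourier]
    simp only [lamF_exp_eq_convolution]
    exact Real.fourier_mul_convolution_eq hΦ hΦ ξ
  have hnorm : ‖𝓕 Φ ξ‖ ≤ 2 := calc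
    ‖𝓕 Φ ξ‖ ≤ ∫ x, ‖Φ x‖ := VectorFourier.norm_fourierIntegral_le_integral_norm _ _ _ _ _
    _ ≤ 1 * (1 - -1) := integral_norm_le_of_tsupport_subset_Icc (by norm_num) hΦsupp
        fun x ↦ by simpa [Φ, abs_of_nonneg (hbd x).1] using (hbd x).2
    _ = 2 := by norm_num
  rw [hu]
  simpa [show (2 : ℝ) ^ 2 = 4 by norm_num] using
    mul_self_bounds_of_im_eq_zero (fourier_ofReal_im_eq_zero_of_even heven ξ) hnorm
end
end
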